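/- arXiv:2006.09327 — 9 statements merged into one kernel-verified Lean document; each statement's English description precedes it below -/
import Mathlib

section
/- Let f : 2^N → ℝ≥0 be a non-negative monotone submodular function, c : N → ℝ≥0 a cost function, and OPT ⊆ N a set with c(OPT) ≤ 1. Suppose S̃ ⊆ N satisfies: for every u ∈ OPT \ S̃, f(u | S̃) ≤ c(u) · f(S̃). Then f(S̃) ≥ f(OPT)/2. -/
open Finset

theorem subadd_aux {α : Type*} [DecidableEq α]
    (f : Finset α → ℝ)
    (hf_submod : ∀ ⦃S T : Finset α⦄, S ⊆ T → ∀ u ∉ T,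
      f (insert u T) - f T ≤ f (insert u S) - f S)
    (S : Finset α) :
    ∀ A : Finset α, Disjoint A S →
      f (S ∪ A) - f S ≤ ∑ u ∈ A, (f (insert u S) - f S) := by
  intro A
  induction A using Finset.induction_on with
  | empty => simp
  | @insert a A ha ih =>
    intro hdis
    rw [Finset.disjoint_insert_left] at hdis
    have h1 := ih hdis.2
    rw [Finset.sum_insert ha]
    have hnot : a ∉ S ∪ A := by
      simp only [Finset.mem_union, not_or]
      exact ⟨hdis.1, ha⟩
    have h2 := hf_submod (Finset.subset_union_left (s₁ := S) (s₂ := A)) a hnot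
    have : S ∪ insert a A = insert a (S ∪ A) := by
      ext x; simp [or_comm, or_left_comm]
    rw [this]
    linarith

/-- If every element of `OPT \ S` has marginal contribution to `S` at most
`c u * f S`, and `c OPT ≤ 1`, then `f S ≥ f OPT / 2`. -/
theorem stmt_0 {α : Type*} [DecidableEq α] [Fintype α]
    (f : Finset α → ℝ) (c : α → ℝ)
    (hf_nonneg : ∀ S : Finset α, 0 ≤ f S)
    (hf_mono : ∀ ⦃S T : Finset α⦄, S ⊆ T → f S ≤ f T)
    (hf_submod : ∀ ⦃S T : Finset α⦄, S ⊆ T → ∀ u ∉ T,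
      f (insert u T) - f T ≤ f (insert u S) - f S)
    (hc : ∀ u, 0 ≤ c u)
    (OPT S : Finset α)
    (hOPT : ∑ u ∈ OPT, c u ≤ 1)
    (hS : ∀ u ∈ OPT \ S, f (insert u S) - f S ≤ c u * f S) :
    f S ≥ f OPT / 2 := by
  have hdis : Disjoint (OPT \ S) S := Finset.sdiff_disjoint
  have h1 := subadd_aux f hf_submod S (OPT \ S) hdis
  have hsub : OPT ⊆ S ∪ (OPT \ S) := by
    intro x hx; simp [hx]
  have h2 : f OPT ≤ f (S ∪ (OPT \ S)) := hf_mono hsub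
  have h3 : ∑ u ∈ OPT \ S, (f (insert u S) - f S) ≤ ∑ u ∈ OPT \ S, c u * f S :=
    Finset.sum_le_sum hS
  have h4 : ∑ u ∈ OPT \ S, c u * f S = (∑ u ∈ OPT \ S, c u) * f S := by
    rw [Finset.sum_mul]
  have h5 : ∑ u ∈ OPT \ S, c u ≤ ∑ u ∈ OPT, c u :=
    Finset.sum_le_sum_of_subset_of_nonneg (Finset.sdiff_subset) (fun i _ _ => hc i)
  have h6 : (∑ u ∈ OPT \ S, c u) * f S ≤ 1 * f S := by
    apply mul_le_mul_of_nonneg_right (le_trans h5 hOPT) (hf_nonneg S)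
  linarith
end

section
/- Let f : 2^N → ℝ≥0 be non-negative, monotone and submodular, c : N → ℝ≥0 a cost function, ρ ≥ 0, and let S_ℓ ⊆ N. Suppose T ⊆ N satisfies c(u) ≤ 1 − c(S_ℓ) for every u ∈ T, and f(u | S_ℓ) ≤ ρ · c(u) for every u ∈ T \ S_ℓ. Then f(S_ℓ) ≥ f(T) − ρ · c(T). -/
open Finset

lemma marg_sum {α : Type*} [DecidableEq α]
    (f : Finset α → ℝ)
    (hf_submod : ∀ ⦃A B : Finset α⦄, A ⊆ B → ∀ u ∉ B,
      f (insert u B) - f B ≤ f (insert u A) - f A)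
    (S : Finset α) :
    ∀ D : Finset α, Disjoint S D →
      f (S ∪ D) ≤ f S + ∑ u ∈ D, (f (insert u S) - f S) := by
  intro D
  induction D using Finset.induction_on with
  | empty => simp
  | @insert a D hu ih =>
    intro hdisj
    have hdisj' : Disjoint S D := hdisj.mono_right (Finset.subset_insert a D)
    have haS : a ∉ S := fun h => (Finset.disjoint_left.mp hdisj) h (Finset.mem_insert_self a D)
    have haSD : a ∉ S ∪ D := by simp [haS, hu]
    have h1 : f (insert a (S ∪ D)) - f (S ∪ D) ≤ f (insert a S) - f S :=
      hf_submod (Finset.subset_union_left) a haSD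
    have h2 := ih hdisj'
    have : S ∪ insert a D = insert a (S ∪ D) := by
      ext x; simp [or_comm, or_assoc, or_left_comm]
    rw [this, Finset.sum_insert hu]
    linarith

/-- unfilled bound: if every element of `T` fits in the remaining budget and
every element of `T \ S` has density below `ρ`, then `f S ≥ f T − ρ · c T`. -/
theorem stmt_3 {α : Type*} [DecidableEq α]
    (f : Finset α → ℝ) (c : α → ℝ) (ρ : ℝ)
    (hf_nonneg : ∀ S : Finset α, 0 ≤ f S)
    (hf_mono : ∀ ⦃A B : Finset α⦄, A ⊆ B → f A ≤ f B)
    (hf_submod : ∀ ⦃A B : Finset α⦄, A ⊆ B → ∀ u ∉ B,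
      f (insert u B) - f B ≤ f (insert u A) - f A)
    (hc : ∀ u, 0 ≤ c u) (hρ : 0 ≤ ρ)
    (S T : Finset α)
    (hfit : ∀ u ∈ T, c u ≤ 1 - ∑ v ∈ S, c v)
    (hdens : ∀ u ∈ T \ S, f (insert u S) - f S ≤ ρ * c u) :
    f S ≥ f T - ρ * ∑ u ∈ T, c u := by
  have hT : f T ≤ f (S ∪ (T \ S)) := hf_mono (by intro x hx; exact Finset.mem_union.mpr (if h : x ∈ S then Or.inl h else Or.inr (Finset.mem_sdiff.mpr ⟨hx, h⟩)))
  have hsum := marg_sum f hf_submod S (T \ S) (Finset.disjoint_sdiff)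
  have h3 : ∑ u ∈ T \ S, (f (insert u S) - f S) ≤ ∑ u ∈ T \ S, ρ * c u :=
    Finset.sum_le_sum hdens
  have h4 : ∑ u ∈ T \ S, ρ * c u ≤ ∑ u ∈ T, ρ * c u :=
    Finset.sum_le_sum_of_subset_of_nonneg (Finset.sdiff_subset)
      (fun u _ _ => mul_nonneg hρ (hc u))
  rw [← Finset.mul_sum, ← Finset.mul_sum] at h4
  rw [← Finset.mul_sum] at h3
  linarith
end

section
/- Let f : 2^N → ℝ≥0 be non-negative, monotone and submodular, c : N → ℝ≥0, ε ∈ (0,1), τ > 0, S ⊆ N, and ∅ ≠ T ⊆ N with T ⊄ S. Suppose f(u | S) < τ/(1−ε) · c(u) for every u ∈ T \ S, and let v ∉ S be an element with f(v | S) ≥ τ · c(v) and c(v) > 0. Then f(v | S)/c(v) > (1−ε) · f(T | S)/c(T), where f(T | S) = f(S ∪ T) − f(S). -/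
open Finset

lemma submod_sum_bound {α : Type*} [DecidableEq α]
    (f : Finset α → ℝ)
    (hf_submod : ∀ ⦃A B : Finset α⦄, A ⊆ B → ∀ u ∉ B,
      f (insert u B) - f B ≤ f (insert u A) - f A)
    (S : Finset α) :
    ∀ T : Finset α, f (S ∪ T) - f S ≤ ∑ u ∈ T \ S, (f (insert u S) - f S) := by
  intro T
  induction T using Finset.induction with
  | empty => simp
  | @insert a T ha ih =>
    by_cases haS : a ∈ S
    · have h1 : S ∪ insert a T = S ∪ T := by
        rw [Finset.union_insert, Finset.insert_eq_self.2 (Finset.mem_union_left _ haS)]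
      have h2 : insert a T \ S = T \ S := by
        rw [Finset.insert_sdiff_of_mem _ haS]
      rw [h1, h2]; exact ih
    · have h1 : S ∪ insert a T = insert a (S ∪ T) := by
        rw [Finset.union_insert]
      have h2 : insert a T \ S = insert a (T \ S) := by
        rw [Finset.insert_sdiff_of_notMem _ haS]
      have haST : a ∉ S ∪ T := by simp [haS, ha]
      have hsub := hf_submod (Finset.subset_union_left (s₁ := S) (s₂ := T)) a haST
      rw [h1, h2, Finset.sum_insert (by simp [ha])]
      have : f (insert a (S ∪ T)) - f S =
          (f (insert a (S ∪ T)) - f (S ∪ T)) + (f (S ∪ T) - f S) := by ring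
      rw [this]
      exact add_le_add hsub ih

/-- key density step of fast threshold greedy. -/
theorem stmt_4 {α : Type*} [DecidableEq α]
    (f : Finset α → ℝ) (c : α → ℝ) (ε τ : ℝ)
    (hf_nonneg : ∀ S : Finset α, 0 ≤ f S)
    (hf_mono : ∀ ⦃A B : Finset α⦄, A ⊆ B → f A ≤ f B)
    (hf_submod : ∀ ⦃A B : Finset α⦄, A ⊆ B → ∀ u ∉ B,
      f (insert u B) - f B ≤ f (insert u A) - f A)
    (hε0 : 0 < ε) (hε1 : ε < 1) (hτ : 0 < τ)
    (S T : Finset α) (hT_ne : T.Nonempty) (hTS : ¬ T ⊆ S)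
    (hcT : ∀ u ∈ T, 0 < c u)
    (hdens : ∀ u ∈ T \ S, f (insert u S) - f S < τ / (1 - ε) * c u)
    (v : α) (hv : v ∉ S) (hvc : 0 < c v)
    (hv_thresh : f (insert v S) - f S ≥ τ * c v) :
    (f (insert v S) - f S) / c v >
      (1 - ε) * (f (S ∪ T) - f S) / ∑ u ∈ T, c u := by
  have h1ε : 0 < 1 - ε := by linarith
  obtain ⟨w, hwT, hwS⟩ : ∃ w ∈ T, w ∉ S := by
    by_contra h; push_neg at h; exact hTS h
  have hTSne : (T \ S).Nonempty := ⟨w, Finset.mem_sdiff.2 ⟨hwT, hwS⟩⟩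
  have hcsum_pos : 0 < ∑ u ∈ T, c u :=
    Finset.sum_pos hcT hT_ne
  have hcsum_sub_pos : 0 < ∑ u ∈ T \ S, c u :=
    Finset.sum_pos (fun u hu => hcT u (Finset.mem_sdiff.1 hu).1) hTSne
  -- marginal bound
  have hbound : f (S ∪ T) - f S < τ / (1 - ε) * ∑ u ∈ T, c u := by
    calc f (S ∪ T) - f S ≤ ∑ u ∈ T \ S, (f (insert u S) - f S) :=
          submod_sum_bound f hf_submod S T
      _ < ∑ u ∈ T \ S, τ / (1 - ε) * c u :=
          Finset.sum_lt_sum_of_nonempty hTSne hdens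
      _ = τ / (1 - ε) * ∑ u ∈ T \ S, c u := by rw [Finset.mul_sum]
      _ ≤ τ / (1 - ε) * ∑ u ∈ T, c u := by
          apply mul_le_mul_of_nonneg_left _ (le_of_lt (div_pos hτ h1ε))
          exact Finset.sum_le_sum_of_subset_of_nonneg (Finset.sdiff_subset)
            (fun u hu _ => le_of_lt (hcT u hu))
  have hLHS : τ ≤ (f (insert v S) - f S) / c v := by
    rw [le_div_iff₀ hvc]; linarith [hv_thresh]
  have hRHS : (1 - ε) * (f (S ∪ T) - f S) / ∑ u ∈ T, c u < τ := by
    rw [div_lt_iff₀ hcsum_pos]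
    have := hbound
    have h2 : (1 - ε) * (f (S ∪ T) - f S) < (1 - ε) * (τ / (1 - ε) * ∑ u ∈ T, c u) :=
      mul_lt_mul_of_pos_left this h1ε
    calc (1 - ε) * (f (S ∪ T) - f S) < (1 - ε) * (τ / (1 - ε) * ∑ u ∈ T, c u) := h2
      _ = τ * ∑ u ∈ T, c u := by field_simp
  linarith
end

section
/- Let c_1, …, c_d : N → ℝ≥0 be cost functions and λ ≥ 1 an integer. Let S ⊆ N satisfy (i) c_i(S) > 1 for some 1 ≤ i ≤ d, and (ii) max_{1≤i≤d} c_i(u) ≤ 1/λ for every u ∈ S. Then there exists a subset T ⊆ S with max_{1≤i≤d} c_i(T) ≤ 1 and Σ_{i=1}^{d} c_i(T) ≥ λ/(λ+1). -/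
/-!
Take an inclusion-minimal `T ⊆ S` on which some cost exceeds `λ/(λ+1)`; by minimality every
`T \ {v}` has all costs at most `λ/(λ+1)`. If `|T| ≤ λ`, each cost of `T` is at most
`|T|/λ ≤ 1` since elements are small. Otherwise, removing an element of least `c_i`-cost
keeps at least a `1 - 1/|T| ≥ λ/(λ+1)` fraction of `c_i(T)`, which again forces `c_i(T) ≤ 1`.
-/

open Finset

lemma sum_le_one_of_card_le_of_forall_le {α : Type*} {f : α → ℝ} {T : Finset α} {lam : ℕ}
    (hcard : #T ≤ lam) (hsmall : ∀ u ∈ T, f u ≤ 1 / lam) : ∑ u ∈ T, f u ≤ 1 :=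
  calc ∑ u ∈ T, f u ≤ #T • (1 / (lam : ℝ)) := sum_le_card_nsmul T f _ hsmall
    _ = #T / lam := by rw [nsmul_eq_mul, mul_one_div]
    _ ≤ 1 := div_le_one_of_le₀ (by exact_mod_cast hcard) lam.cast_nonneg

lemma sum_le_one_of_lt_card_of_forall_sum_erase_le {α : Type*} [DecidableEq α] {f : α → ℝ}
    {T : Finset α} {lam : ℕ} (hlam : 0 < lam) (hcard : lam < #T)
    (herase : ∀ v ∈ T, ∑ u ∈ T.erase v, f u ≤ lam / (lam + 1)) : ∑ u ∈ T, f u ≤ 1 := by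
  obtain ⟨v, hv, hvmin⟩ := T.exists_min_image f (card_pos.1 (hlam.trans hcard))
  set s := ∑ u ∈ T, f u
  set e := ∑ u ∈ T.erase v, f u
  have hn : (lam : ℝ) + 1 ≤ #T := by exact_mod_cast hcard
  have hcheap : #T * f v ≤ s := by simpa using card_nsmul_le_sum T f (f v) hvmin
  have hsplit : s = f v + e := (add_sum_erase T f hv).symm
  have hrest : e * (lam + 1) ≤ lam := (le_div_iff₀ (by positivity)).1 (herase v hv)
  have hcard_rest : #T * e ≤ #T - 1 := by nlinarith
  -- `|T| s = |T| f v + |T| e ≤ s + (|T| - 1)`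
  have hscaled : (#T - 1) * s ≤ #T - 1 := by nlinarith
  have hpos : (0 : ℝ) < #T - 1 := by linarith [(Nat.cast_pos.2 hlam : (0 : ℝ) < lam)]
  exact (mul_le_iff_le_one_right hpos).1 hscaled

lemma sum_le_one_of_forall_sum_erase_le {α : Type*} [DecidableEq α] {f : α → ℝ}
    {T : Finset α} {lam : ℕ} (hlam : 0 < lam) (hsmall : ∀ u ∈ T, f u ≤ 1 / lam)
    (herase : ∀ v ∈ T, ∑ u ∈ T.erase v, f u ≤ lam / (lam + 1)) : ∑ u ∈ T, f u ≤ 1 := by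
  rcases le_or_gt #T lam with hcard | hcard
  · exact sum_le_one_of_card_le_of_forall_le hcard hsmall
  · exact sum_le_one_of_lt_card_of_forall_sum_erase_le hlam hcard herase

theorem stmt_6_general {α : Type*} [DecidableEq α] (d lam : ℕ) (hlam : 1 ≤ lam)
    (c : Fin d → α → ℝ) (hc : ∀ i u, 0 ≤ c i u)
    (S : Finset α)
    (hviol : ∃ i : Fin d, 1 < ∑ u ∈ S, c i u)
    (hsmall : ∀ u ∈ S, ∀ i : Fin d, c i u ≤ 1 / (lam : ℝ)) :
    ∃ T ⊆ S, (∀ i : Fin d, ∑ u ∈ T, c i u ≤ 1) ∧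
      (lam : ℝ) / ((lam : ℝ) + 1) ≤ ∑ i : Fin d, ∑ u ∈ T, c i u := by
  set θ : ℝ := lam / (lam + 1)
  have hθ : θ < 1 := (div_lt_one (by positivity)).2 (lt_add_one _)
  obtain ⟨T, hTS, hTmin⟩ := exists_minimal_le_of_wellFoundedLT
    (fun T : Finset α ↦ ∃ j, θ < ∑ u ∈ T, c j u) S (hviol.imp fun _ hj ↦ hθ.trans hj)
  obtain ⟨j, hj⟩ := hTmin.prop
  refine ⟨T, hTS, fun i ↦ ?_, ?_⟩
  · refine sum_le_one_of_forall_sum_erase_le hlam (fun u hu ↦ hsmall u (hTS hu) i) fun v hv ↦ ?_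
    exact not_lt.1 fun hi ↦ hTmin.not_prop_of_lt (erase_ssubset hv) ⟨i, hi⟩
  · exact hj.le.trans (single_le_sum (fun i _ ↦ sum_nonneg fun u _ ↦ hc i u) (mem_univ j))

/-- SetExtract guarantee. -/
theorem stmt_6 {α : Type*} [DecidableEq α] (d lam : ℕ) (hd : 1 ≤ d) (hlam : 1 ≤ lam)
    (c : Fin d → α → ℝ) (hc : ∀ i u, 0 ≤ c i u)
    (S : Finset α)
    (hviol : ∃ i : Fin d, 1 < ∑ u ∈ S, c i u)
    (hsmall : ∀ u ∈ S, ∀ i : Fin d, c i u ≤ 1 / (lam : ℝ)) :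
    ∃ T ⊆ S, (∀ i : Fin d, ∑ u ∈ T, c i u ≤ 1) ∧
      (lam : ℝ) / ((lam : ℝ) + 1) ≤ ∑ i : Fin d, ∑ u ∈ T, c i u :=
  stmt_6_general d lam hlam c hc S hviol hsmall
end

section
/- Let M = (N, I) be a p-set system and let O, S ∈ I be independent sets such that no element of O \ S can be added to S while keeping independence (i.e., S + u ∉ I for every u ∈ O \ S). Then |O| ≤ p·|S|. -/
open Finset

/-- in a `p`-set system, if no element of `O \ S` can be added to `S`
keeping independence, then `|O| ≤ p·|S|`. -/
theorem stmt_7 {α : Type*} [DecidableEq α] [Fintype α]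
    (I : Finset α → Prop) (p : ℕ)
    (h_nonempty : ∃ A, I A)
    (h_down : ∀ ⦃A B : Finset α⦄, A ⊆ B → I B → I A)
    (h_psystem : ∀ A B₁ B₂ : Finset α,
      B₁ ⊆ A → I B₁ → (∀ u ∈ A, u ∉ B₁ → ¬ I (insert u B₁)) →
      B₂ ⊆ A → I B₂ → (∀ u ∈ A, u ∉ B₂ → ¬ I (insert u B₂)) →
      B₁.card ≤ p * B₂.card)
    (O S : Finset α) (hO : I O) (hS : I S)
    (hblock : ∀ u ∈ O, u ∉ S → ¬ I (insert u S)) :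
    O.card ≤ p * S.card := by
  classical
  set A := S ∪ O with hA
  -- S is a base of A
  have hSbase : ∀ u ∈ A, u ∉ S → ¬ I (insert u S) := by
    intro u hu hus
    rcases Finset.mem_union.1 hu with h | h
    · exact absurd h hus
    · exact hblock u h hus
  -- find a base B of A containing O
  have hfin : (Finset.univ.filter (fun B : Finset α => O ⊆ B ∧ B ⊆ A ∧ I B)).Nonempty := by
    refine ⟨O, ?_⟩
    simp only [Finset.mem_filter, Finset.mem_univ, true_and]
    exact ⟨Finset.Subset.refl _, Finset.subset_union_right, hO⟩
  obtain ⟨B, hBmem, hBmax⟩ := Finset.exists_max_image _ Finset.card hfin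
  simp only [Finset.mem_filter, Finset.mem_univ, true_and] at hBmem hBmax
  obtain ⟨hOB, hBA, hIB⟩ := hBmem
  have hBbase : ∀ u ∈ A, u ∉ B → ¬ I (insert u B) := by
    intro u hu hub hI
    have : (insert u B).card ≤ B.card := by
      refine hBmax _ ⟨hOB.trans (Finset.subset_insert _ _), Finset.insert_subset hu hBA, hI⟩
    rw [Finset.card_insert_of_notMem hub] at this
    omega
  calc O.card ≤ B.card := Finset.card_le_card hOB
    _ ≤ p * S.card := h_psystem A B S hBA hIB hBbase Finset.subset_union_left hS hSbase
end

section
/- Let f : 2^N → ℝ be submodular, A ⊆ N, and let A(p) be a random subset of A containing each element of A with probability p (not necessarily independently). Then E[f(A(p))] ≥ (1−p)·f(∅) + p·f(A). -/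
open Finset

/-- Sum of marginal increments of `f` along a list `l`, restricted to elements in `S`,
with prefix accumulator `Q`. -/
noncomputable def sumInc {α : Type*} [DecidableEq α] (f : Finset α → ℝ) :
    List α → Finset α → Finset α → ℝ
  | [], _, _ => 0
  | a :: l, S, Q => (if a ∈ S then f (insert a Q) - f Q else 0) + sumInc f l S (insert a Q)

lemma sumInc_congr {α : Type*} [DecidableEq α] (f : Finset α → ℝ) :
    ∀ (l : List α) (Q S S' : Finset α), (∀ x ∈ l, (x ∈ S ↔ x ∈ S')) →
    sumInc f l S Q = sumInc f l S' Q
  | [], _, _, _, _ => rfl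
  | a :: l, Q, S, S', h => by
      simp only [sumInc]
      rw [sumInc_congr f l (insert a Q) S S' (fun x hx => h x (by simp [hx]))]
      have := h a (by simp)
      by_cases ha : a ∈ S
      · rw [if_pos ha, if_pos (this.mp ha)]
      · rw [if_neg ha, if_neg (fun h' => ha (this.mpr h'))]

lemma sumInc_key {α : Type*} [DecidableEq α] (f : Finset α → ℝ)
    (hf : ∀ S T : Finset α, f (S ∪ T) + f (S ∩ T) ≤ f S + f T) :
    ∀ (l : List α) (Q S : Finset α), l.Nodup → S ⊆ l.toFinset →
    f Q + sumInc f l S Q ≤ f (S ∪ Q)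
  | [], Q, S, _, hS => by
      simp only [List.toFinset_nil, Finset.subset_empty] at hS
      subst hS; simp [sumInc]
  | a :: l, Q, S, hnd, hS => by
      simp only [List.nodup_cons] at hnd
      by_cases haS : a ∈ S
      · have hS' : S.erase a ⊆ l.toFinset := by
          intro x hx
          have hx' := hS (Finset.mem_of_mem_erase hx)
          simp only [List.toFinset_cons, Finset.mem_insert, List.mem_toFinset] at hx' ⊢
          rcases hx' with h | h
          · exact absurd h (Finset.ne_of_mem_erase hx)
          · exact h
        have IH := sumInc_key f hf l (insert a Q) (S.erase a) hnd.2 hS'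
        have hcong : sumInc f l (S.erase a) (insert a Q) = sumInc f l S (insert a Q) := by
          refine sumInc_congr f l _ _ _ (fun x hx => ?_)
          have hxa : x ≠ a := fun h => hnd.1 (h ▸ hx)
          simp [Finset.mem_erase, hxa]
        have hset : S.erase a ∪ insert a Q = S ∪ Q := by
          ext x
          simp only [Finset.mem_union, Finset.mem_erase, Finset.mem_insert]
          constructor
          · rintro (⟨_, h⟩ | (rfl | h)) <;> tauto
          · rintro (h | h)
            · by_cases hxa : x = a <;> tauto
            · tauto
        rw [hcong, hset] at IH
        simp only [sumInc, if_pos haS]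
        linarith
      · have IH := sumInc_key f hf l (insert a Q) S hnd.2 (by
          intro x hx
          have hx' := hS hx
          simp only [List.toFinset_cons, Finset.mem_insert, List.mem_toFinset] at hx' ⊢
          rcases hx' with rfl | h
          · exact absurd hx haS
          · exact h)
        have hsub := hf (S ∪ Q) (insert a Q)
        have h1 : (S ∪ Q) ∪ insert a Q = S ∪ insert a Q := by
          ext x; simp only [Finset.mem_union, Finset.mem_insert]; tauto
        have h2 : (S ∪ Q) ∩ insert a Q = Q := by
          ext x
          simp only [Finset.mem_inter, Finset.mem_union, Finset.mem_insert]
          constructor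
          · rintro ⟨h | h, rfl | h'⟩ <;> first | (exact absurd h haS) | assumption
          · intro h; tauto
        rw [h1, h2] at hsub
        simp only [sumInc, if_neg haS]
        linarith

lemma exp_ite {α Ω : Type*} [DecidableEq α] [Fintype Ω] (w : Ω → ℝ) (a : α)
    (X : Ω → Finset α) (c : ℝ) :
    (∑ ω : Ω, w ω * if a ∈ X ω then c else 0)
      = (∑ ω ∈ Finset.univ.filter (fun ω : Ω => a ∈ X ω), w ω) * c := by
  rw [Finset.sum_mul, Finset.sum_filter]
  refine Finset.sum_congr rfl (fun ω _ => ?_)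
  by_cases hω : a ∈ X ω <;> simp [hω]

lemma sumInc_exp {α Ω : Type*} [DecidableEq α] [Fintype Ω] (f : Finset α → ℝ)
    (w : Ω → ℝ) (p : ℝ) (X : Ω → Finset α)
    [instX : ∀ u, DecidablePred fun ω : Ω => u ∈ X ω] :
    ∀ (l : List α) (Q : Finset α),
    (∀ u ∈ l, ∑ ω ∈ Finset.univ.filter (fun ω : Ω => u ∈ X ω), w ω = p) →
    ∑ ω : Ω, w ω * sumInc f l (X ω) Q = p * (f (l.toFinset ∪ Q) - f Q)
  | [], Q, _ => by simp [sumInc]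
  | a :: l, Q, h => by
      have IH := sumInc_exp f w p X l (insert a Q) (fun u hu => h u (by simp [hu]))
      have hmarg := h a (by simp)
      have hset : l.toFinset ∪ insert a Q = (a :: l).toFinset ∪ Q := by
        ext x
        simp only [Finset.mem_union, Finset.mem_insert, List.toFinset_cons,
          List.mem_toFinset]
        tauto
      simp only [sumInc, mul_add, Finset.sum_add_distrib, IH, hset]
      rw [exp_ite w a X]
      have hm2 : (∑ ω ∈ @Finset.filter Ω (fun ω : Ω => a ∈ X ω)
          (fun ω => Finset.decidableMem a (X ω)) Finset.univ, w ω) = p := by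
        rw [← hmarg]
        exact Finset.sum_congr
          (@Finset.filter_congr Ω _ _ (fun ω => Finset.decidableMem a (X ω)) (instX a)
            Finset.univ (fun x _ => Iff.rfl)) fun _ _ => rfl
      rw [hm2]
      ring

/-- sampling lemma of Feige–Mirrokni–Vondrák: for a random subset `X` of `A`
containing each element of `A` with probability `p` (not necessarily independently),
`E[f(X)] ≥ (1−p)·f(∅) + p·f(A)`. -/
theorem stmt_8 {α Ω : Type*} [DecidableEq α] [Fintype Ω] [DecidableEq Ω]
    (f : Finset α → ℝ)
    (hf_submod : ∀ S T : Finset α, f (S ∪ T) + f (S ∩ T) ≤ f S + f T)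
    (A : Finset α) (p : ℝ) (hp0 : 0 ≤ p) (hp1 : p ≤ 1)
    (w : Ω → ℝ) (hw : ∀ ω, 0 ≤ w ω) (hw1 : ∑ ω : Ω, w ω = 1)
    (X : Ω → Finset α) (hX : ∀ ω, X ω ⊆ A)
    [∀ u, DecidablePred fun ω : Ω => u ∈ X ω]
    (hmarg : ∀ u ∈ A, ∑ ω ∈ Finset.univ.filter (fun ω : Ω => u ∈ X ω), w ω = p) :
    (1 - p) * f ∅ + p * f A ≤ ∑ ω : Ω, w ω * f (X ω) := by
  set l := A.toList with hl
  have hlA : l.toFinset = A := Finset.toList_toFinset A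
  have hnd : l.Nodup := Finset.nodup_toList A
  have hpt : ∀ ω : Ω, f ∅ + sumInc f l (X ω) ∅ ≤ f (X ω) := by
    intro ω
    have := sumInc_key f hf_submod l ∅ (X ω) hnd (by rw [hlA]; exact hX ω)
    simpa using this
  have hsum : ∑ ω : Ω, w ω * (f ∅ + sumInc f l (X ω) ∅) ≤ ∑ ω : Ω, w ω * f (X ω) :=
    Finset.sum_le_sum (fun ω _ => mul_le_mul_of_nonneg_left (hpt ω) (hw ω))
  have hexp : ∑ ω : Ω, w ω * sumInc f l (X ω) ∅ = p * (f A - f ∅) := by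
    rw [sumInc_exp f w p X l ∅ (fun u hu => hmarg u (by rwa [← hlA, List.mem_toFinset]))]
    rw [Finset.union_empty, hlA]
  calc (1 - p) * f ∅ + p * f A
      = ∑ ω : Ω, w ω * (f ∅ + sumInc f l (X ω) ∅) := by
        simp only [mul_add, Finset.sum_add_distrib, hexp, ← Finset.sum_mul, hw1]
        ring
    _ ≤ ∑ ω : Ω, w ω * f (X ω) := hsum
end

section
/- Let f : 2^N → ℝ≥0 be non-negative and submodular, let B ⊆ N, and let OPT ⊆ N with |OPT ∩ B| ≥ 2. If R is a uniformly random 2-element subset of OPT ∩ B, then E[f(R)] ≥ (2/|OPT ∩ B|) · f(OPT ∩ B). Consequently, max over 2-element subsets P of B of f(P) is at least (2/|OPT ∩ B|) · f(OPT ∩ B). -/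
open Finset

section Aux

variable {α : Type*} [DecidableEq α] (f : Finset α → ℝ)
    (hf_nonneg : ∀ S : Finset α, 0 ≤ f S)
    (hf_submod : ∀ S T : Finset α, f (S ∪ T) + f (S ∩ T) ≤ f S + f T)

include hf_nonneg hf_submod in
lemma aux_subadd (S T : Finset α) : f (S ∪ T) ≤ f S + f T := by
  have := hf_submod S T
  have := hf_nonneg (S ∩ T)
  linarith

include hf_submod in
lemma aux_star (x : α) : ∀ (A : Finset α), x ∉ A →
    f (insert x A) + (A.card : ℝ) * f {x} ≤ (∑ y ∈ A, f (insert x {y})) + f {x} := by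
  intro A
  induction A using Finset.induction with
  | empty => simp
  | @insert z A hz ih =>
    intro hx
    simp only [mem_insert, not_or] at hx
    obtain ⟨hxz, hxA⟩ := hx
    have key : f (insert x (insert z A)) + f {x} ≤ f (insert x {z}) + f (insert x A) := by
      have h := hf_submod (insert x {z}) (insert x A)
      have hU : insert x {z} ∪ insert x A = insert x (insert z A) := by
        ext a; simp [or_comm, or_left_comm, or_assoc]
      have hI : insert x {z} ∩ insert x A = {x} := by
        ext a
        simp only [mem_inter, mem_insert, mem_singleton]
        constructor
        · rintro ⟨h1 | h1, h2⟩
          · exact h1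
          · subst h1
            rcases h2 with h2 | h2
            · exact absurd h2.symm hxz
            · exact absurd h2 hz
        · rintro rfl; exact ⟨Or.inl rfl, Or.inl rfl⟩
      rw [hU, hI] at h
      linarith
    rw [Finset.sum_insert hz, Finset.card_insert_of_notMem hz]
    have := ih hxA
    push_cast
    linarith

include hf_nonneg hf_submod in
lemma aux_main : ∀ (A : Finset α),
    ((A.card : ℝ) - 1) * f A ≤ ∑ R ∈ A.powersetCard 2, f R := by
  intro A
  induction A using Finset.induction with
  | empty =>
    simp only [Finset.card_empty, Nat.cast_zero]
    have h0 : (∅ : Finset α).powersetCard 2 = ∅ := by simp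
    rw [h0, Finset.sum_empty]
    nlinarith [hf_nonneg (∅ : Finset α)]
  | @insert x A hx ih =>
    have hdecomp : (insert x A).powersetCard 2
        = A.powersetCard 2 ∪ (A.powersetCard 1).image (insert x) := by
      exact Finset.powersetCard_succ_insert hx 1
    have hdisj : Disjoint (A.powersetCard 2) ((A.powersetCard 1).image (insert x)) := by
      rw [Finset.disjoint_left]
      intro t ht ht'
      rw [Finset.mem_powersetCard] at ht
      obtain ⟨s, hs, rfl⟩ := Finset.mem_image.mp ht'
      exact hx (ht.1 (Finset.mem_insert_self x s))
    have hinj : Set.InjOn (insert x) (A.powersetCard 1 : Set (Finset α)) := by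
      intro s hs t ht hst
      rw [Finset.mem_coe, Finset.mem_powersetCard] at hs ht
      have hxs : x ∉ s := fun h => hx (hs.1 h)
      have hxt : x ∉ t := fun h => hx (ht.1 h)
      ext a
      constructor
      · intro ha
        have : a ∈ insert x t := hst ▸ Finset.mem_insert_of_mem ha
        rcases Finset.mem_insert.mp this with h | h
        · exact absurd (h ▸ ha) hxs
        · exact h
      · intro ha
        have : a ∈ insert x s := hst ▸ Finset.mem_insert_of_mem ha
        rcases Finset.mem_insert.mp this with h | h
        · exact absurd (h ▸ ha) hxt
        · exact h
    have hsum : ∑ R ∈ (insert x A).powersetCard 2, f R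
        = (∑ R ∈ A.powersetCard 2, f R) + ∑ y ∈ A, f (insert x {y}) := by
      rw [hdecomp, Finset.sum_union hdisj, Finset.sum_image (fun s hs t ht h => hinj hs ht h)]
      congr 1
      rw [Finset.powersetCard_one, Finset.sum_map]
      rfl
    rw [hsum, Finset.card_insert_of_notMem hx]
    rcases Finset.eq_empty_or_nonempty A with rfl | hA
    · simp only [Finset.card_empty, Nat.cast_zero]
      have h0 : (∅ : Finset α).powersetCard 2 = ∅ := by simp
      rw [h0, Finset.sum_empty, Finset.sum_empty]
      norm_num
    · have hstar := aux_star f hf_submod x A hx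
      have hsub : f (insert x A) ≤ f A + f {x} := by
        have := aux_subadd f hf_nonneg hf_submod A {x}
        have hU : A ∪ {x} = insert x A := by ext a; simp [or_comm]
        rw [hU] at this
        exact this
      have hc1 : (1 : ℝ) ≤ (A.card : ℝ) := by
        exact_mod_cast Finset.card_pos.mpr hA
      push_cast
      nlinarith [hf_nonneg (insert x A), hf_nonneg A, hf_nonneg ({x} : Finset α)]

end Aux

/-- the average of `f` over the 2-element subsets of `OPT ∩ B` is at least
`(2/|OPT∩B|)·f(OPT∩B)`, and consequently some 2-element subset of `B` attains this bound. -/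
theorem stmt_9 {α : Type*} [DecidableEq α]
    (f : Finset α → ℝ)
    (hf_nonneg : ∀ S : Finset α, 0 ≤ f S)
    (hf_submod : ∀ S T : Finset α, f (S ∪ T) + f (S ∩ T) ≤ f S + f T)
    (B OPT : Finset α)
    (h2 : 2 ≤ (OPT ∩ B).card) :
    (2 / ((OPT ∩ B).card : ℝ)) * f (OPT ∩ B) ≤
      (∑ R ∈ (OPT ∩ B).powersetCard 2, f R) / (((OPT ∩ B).powersetCard 2).card : ℝ) ∧
    ∃ P ∈ B.powersetCard 2, (2 / ((OPT ∩ B).card : ℝ)) * f (OPT ∩ B) ≤ f P := by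
  set A := OPT ∩ B with hA
  set m : ℕ := A.card with hm
  have hmain := aux_main f hf_nonneg hf_submod A
  have hcard : (((A.powersetCard 2).card : ℝ)) = (m : ℝ) * ((m : ℝ) - 1) / 2 := by
    rw [Finset.card_powersetCard, ← hm, Nat.cast_choose_two]
  have hm2 : (2 : ℝ) ≤ (m : ℝ) := by exact_mod_cast h2
  have hmpos : (0 : ℝ) < (m : ℝ) := by linarith
  have hNpos : (0 : ℝ) < (((A.powersetCard 2).card : ℝ)) := by
    rw [hcard]; nlinarith
  have hkey : (2 / (m : ℝ)) * f A ≤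
      (∑ R ∈ A.powersetCard 2, f R) / (((A.powersetCard 2).card : ℝ)) := by
    rw [le_div_iff₀ hNpos, hcard]
    have heq : 2 / (m : ℝ) * f A * ((m : ℝ) * ((m : ℝ) - 1) / 2)
        = ((m : ℝ) - 1) * f A := by
      field_simp
    rw [heq]
    exact hmain
  refine ⟨hkey, ?_⟩
  have hne : (A.powersetCard 2).Nonempty := by
    rw [← Finset.card_pos]
    exact_mod_cast hNpos
  have hex : ∃ R ∈ A.powersetCard 2, (2 / (m : ℝ)) * f A ≤ f R := by
    apply Finset.exists_le_of_sum_le hne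
    rw [Finset.sum_const, nsmul_eq_mul]
    calc ((A.powersetCard 2).card : ℝ) * ((2 / (m : ℝ)) * f A)
        ≤ ((A.powersetCard 2).card : ℝ) *
          ((∑ R ∈ A.powersetCard 2, f R) / (((A.powersetCard 2).card : ℝ))) :=
          mul_le_mul_of_nonneg_left hkey (le_of_lt hNpos)
      _ = ∑ R ∈ A.powersetCard 2, f R := by
          rw [mul_comm, div_mul_cancel₀ _ (ne_of_gt hNpos)]
  obtain ⟨P, hP, hPf⟩ := hex
  refine ⟨P, ?_, hPf⟩
  rw [Finset.mem_powersetCard] at hP ⊢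
  exact ⟨hP.1.trans (Finset.inter_subset_right), hP.2⟩
end

section
/- Let N be of size n (n even), C* ⊆ N with |C*| = n/2, f(S) = |S∩C*|·(n/2 − |S\C*|), and ε > 0. If a random set T̃ ⊆ N satisfies |T̃∩C*| ≥ |T̃\C*| always and E[f(T̃)] ≥ (1/4 + ε)·n²/4, then E[|T̃∩C*| − |T̃\C*|] ≥ nε/2. -/
open Finset

/-- Corollary 4.13: if always `|T̃∩C*| ≥ |T̃\C*|` and
`E[f(T̃)] ≥ (1/4 + ε)·n²/4`, then `E[|T̃∩C*| − |T̃\C*|] ≥ nε/2`. -/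
theorem stmt_15 {α Ω : Type*} [DecidableEq α] [Fintype α] [Fintype Ω]
    (n : ℕ) (hn : Fintype.card α = n)
    (C : Finset α) (hC : 2 * C.card = n)
    (f : Finset α → ℝ)
    (hf : ∀ S : Finset α, f S = ((S ∩ C).card : ℝ) * ((n : ℝ) / 2 - ((S \ C).card : ℝ)))
    (ε : ℝ) (hε : 0 < ε)
    (w : Ω → ℝ) (hw : ∀ ω, 0 ≤ w ω) (hw1 : ∑ ω : Ω, w ω = 1)
    (T : Ω → Finset α)
    (hbal : ∀ ω, (T ω \ C).card ≤ (T ω ∩ C).card)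
    (hexp : (1 / 4 + ε) * ((n : ℝ) ^ 2 / 4) ≤ ∑ ω : Ω, w ω * f (T ω)) :
    (n : ℝ) * ε / 2 ≤
      ∑ ω : Ω, w ω * (((T ω ∩ C).card : ℝ) - ((T ω \ C).card : ℝ)) := by
  -- pointwise bound: f(Tω) ≤ (n/2)*(a-b) + n²/16
  have key : ∀ ω, w ω * f (T ω) ≤
      w ω * ((n : ℝ)/2 * (((T ω ∩ C).card : ℝ) - ((T ω \ C).card : ℝ)) + (n:ℝ)^2/16) := by
    intro ω
    apply mul_le_mul_of_nonneg_left _ (hw ω)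
    rw [hf]
    have hab : ((T ω \ C).card : ℝ) ≤ ((T ω ∩ C).card : ℝ) := by exact_mod_cast hbal ω
    have hb : (0:ℝ) ≤ ((T ω \ C).card : ℝ) := Nat.cast_nonneg _
    set a : ℝ := ((T ω ∩ C).card : ℝ)
    set b : ℝ := ((T ω \ C).card : ℝ)
    nlinarith [sq_nonneg ((n:ℝ)/4 - b), sq_nonneg (a - b)]
  have hsum : ∑ ω : Ω, w ω * f (T ω) ≤
      ∑ ω : Ω, w ω * ((n : ℝ)/2 * (((T ω ∩ C).card : ℝ) - ((T ω \ C).card : ℝ)) + (n:ℝ)^2/16) :=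
    Finset.sum_le_sum (fun ω _ => key ω)
  have h2 : ∑ ω : Ω, w ω * ((n : ℝ)/2 * (((T ω ∩ C).card : ℝ) - ((T ω \ C).card : ℝ)) + (n:ℝ)^2/16)
      = (n:ℝ)/2 * (∑ ω : Ω, w ω * (((T ω ∩ C).card : ℝ) - ((T ω \ C).card : ℝ))) + (n:ℝ)^2/16 := by
    have e1 : ∀ ω : Ω, w ω * ((n : ℝ)/2 * (((T ω ∩ C).card : ℝ) - ((T ω \ C).card : ℝ)) + (n:ℝ)^2/16)
        = (n:ℝ)/2 * (w ω * (((T ω ∩ C).card : ℝ) - ((T ω \ C).card : ℝ))) + (n:ℝ)^2/16 * w ω := by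
      intro ω; ring
    simp only [e1]
    rw [Finset.sum_add_distrib, ← Finset.mul_sum, ← Finset.mul_sum, hw1, mul_one]
  rw [h2] at hsum
  have hnε : ε * (n:ℝ)^2 / 4 ≤ (n:ℝ)/2 * (∑ ω : Ω, w ω * (((T ω ∩ C).card : ℝ) - ((T ω \ C).card : ℝ))) := by
    nlinarith [le_trans hexp hsum]
  rcases Nat.eq_zero_or_pos n with h0 | hpos
  · subst h0
    simp only [Nat.cast_zero, zero_mul, zero_div]
    apply Finset.sum_nonneg
    intro ω _
    have hab : ((T ω \ C).card : ℝ) ≤ ((T ω ∩ C).card : ℝ) := by exact_mod_cast hbal ω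
    exact mul_nonneg (hw ω) (by linarith)
  · have hn' : (0:ℝ) < n := by exact_mod_cast hpos
    nlinarith [hnε]
end

section
/- Let f : 2^N → ℝ≥0 be non-negative, monotone and submodular, let B ⊆ N, OPT ⊆ N, S_ℓ ⊆ N, ρ ≥ 0, α ∈ (0,1], λ ≥ 1, and cost functions c_1,…,c_d : N → ℝ≥0 with c_i(OPT) ≤ 1 for all i and such that for every u ∈ B there is some i with c_i(u) > 1/λ. Suppose f(S_B) ≥ α·f(OPT ∩ B) for some set S_B, and let O_ℓ = OPT \ (B ∪ {u ∈ OPT : f(u | S_ℓ) < ρ·Σ_{i=1}^d c_i(u)}). Then f(O_ℓ ∪ S_ℓ) ≥ f(OPT) − f(S_B)/α − ρ·(d − |OPT ∩ B|/λ). -/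
open Finset
open scoped Classical

theorem aux_marg_mono {α : Type*} [DecidableEq α]
    (f : Finset α → ℝ)
    (hf_mono : ∀ ⦃A B : Finset α⦄, A ⊆ B → f A ≤ f B)
    (hf_submod : ∀ ⦃A B : Finset α⦄, A ⊆ B → ∀ u ∉ B,
      f (insert u B) - f B ≤ f (insert u A) - f A)
    (C : Finset α) : ∀ S A : Finset α, S ⊆ A →
      f (A ∪ C) - f A ≤ f (S ∪ C) - f S := by
  induction C using Finset.induction with
  | empty => intro S A h; simp
  | @insert u C hu ih =>
    intro S A hSA
    have h1 : A ∪ insert u C = insert u (A ∪ C) := by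
      ext x; simp
    have h2 : S ∪ insert u C = insert u (S ∪ C) := by
      ext x; simp
    rw [h1, h2]
    have hsub : S ∪ C ⊆ A ∪ C := Finset.union_subset_union_left hSA
    have step : f (insert u (A ∪ C)) - f (A ∪ C) ≤ f (insert u (S ∪ C)) - f (S ∪ C) := by
      by_cases hmem : u ∈ A ∪ C
      · rw [Finset.insert_eq_self.mpr hmem]
        have := hf_mono (Finset.subset_insert u (S ∪ C))
        linarith
      · exact hf_submod hsub u hmem
    have := ih S A hSA
    linarith

theorem aux_marg_sum {α : Type*} [DecidableEq α]
    (f : Finset α → ℝ)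
    (hf_mono : ∀ ⦃A B : Finset α⦄, A ⊆ B → f A ≤ f B)
    (hf_submod : ∀ ⦃A B : Finset α⦄, A ⊆ B → ∀ u ∉ B,
      f (insert u B) - f B ≤ f (insert u A) - f A)
    (C S : Finset α) :
    f (S ∪ C) - f S ≤ ∑ u ∈ C, (f (insert u S) - f S) := by
  induction C using Finset.induction with
  | empty => simp
  | @insert u C hu ih =>
    rw [Finset.sum_insert hu]
    have h1 : S ∪ insert u C = insert u (S ∪ C) := by
      ext x; simp
    rw [h1]
    have step : f (insert u (S ∪ C)) - f (S ∪ C) ≤ f (insert u S) - f S := by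
      by_cases hmem : u ∈ S ∪ C
      · rw [Finset.insert_eq_self.mpr hmem]
        have := hf_mono (Finset.subset_insert u S)
        linarith
      · exact hf_submod Finset.subset_union_left u hmem
    linarith

/-- Lemma 5.7: lower bound on `f(O_ℓ ∪ S_ℓ)` where `O_ℓ` is obtained from
`OPT` by removing the big elements and the low-density elements. -/
theorem stmt_17 {α : Type*} [DecidableEq α] (d : ℕ)
    (f : Finset α → ℝ)
    (hf_nonneg : ∀ S : Finset α, 0 ≤ f S)
    (hf_mono : ∀ ⦃A B : Finset α⦄, A ⊆ B → f A ≤ f B)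
    (hf_submod : ∀ ⦃A B : Finset α⦄, A ⊆ B → ∀ u ∉ B,
      f (insert u B) - f B ≤ f (insert u A) - f A)
    (c : Fin d → α → ℝ) (hc : ∀ i u, 0 ≤ c i u)
    (lam ρ a : ℝ) (hlam : 1 ≤ lam) (hρ : 0 ≤ ρ) (ha0 : 0 < a) (ha1 : a ≤ 1)
    (B OPT Sl SB : Finset α)
    (hOPT : ∀ i : Fin d, ∑ u ∈ OPT, c i u ≤ 1)
    (hB : ∀ u ∈ B, ∃ i : Fin d, 1 / lam < c i u)
    (hSB : a * f (OPT ∩ B) ≤ f SB) :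
    f ((OPT \ B).filter
        (fun u => ρ * ∑ i : Fin d, c i u ≤ f (insert u Sl) - f Sl) ∪ Sl)
      ≥ f OPT - f SB / a - ρ * ((d : ℝ) - ((OPT ∩ B).card : ℝ) / lam) := by
  set P : α → Prop := fun u => ρ * ∑ i : Fin d, c i u ≤ f (insert u Sl) - f Sl with hP
  set O : Finset α := (OPT \ B).filter P with hO
  set L : Finset α := (OPT \ B).filter (fun u => ¬ P u) with hL
  set Cc : Finset α := OPT ∩ B with hCc
  -- decomposition
  have hEq : OPT ∪ Sl = ((O ∪ Sl) ∪ L) ∪ Cc := by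
    ext x
    simp only [hO, hL, hCc, Finset.mem_union, Finset.mem_filter, Finset.mem_sdiff,
      Finset.mem_inter]
    by_cases hx : x ∈ B <;> by_cases hx2 : x ∈ OPT <;> by_cases hx3 : P x <;> tauto
  have hlam0 : 0 < lam := lt_of_lt_of_le one_pos hlam
  -- step A : peel off Cc
  have hA : f (((O ∪ Sl) ∪ L) ∪ Cc) - f ((O ∪ Sl) ∪ L) ≤ f Cc := by
    have := aux_marg_mono f hf_mono hf_submod Cc ∅ ((O ∪ Sl) ∪ L) (Finset.empty_subset _)
    have h0 := hf_nonneg (∅ : Finset α)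
    simpa using le_trans this (by simp; linarith)
  -- step B : peel off L
  have hB2 : f ((O ∪ Sl) ∪ L) - f (O ∪ Sl) ≤ f (Sl ∪ L) - f Sl :=
    aux_marg_mono f hf_mono hf_submod L Sl (O ∪ Sl) Finset.subset_union_right
  have hC2 : f (Sl ∪ L) - f Sl ≤ ∑ u ∈ L, (f (insert u Sl) - f Sl) :=
    aux_marg_sum f hf_mono hf_submod L Sl
  -- low density bound
  have hLd : ∑ u ∈ L, (f (insert u Sl) - f Sl) ≤ ρ * ∑ u ∈ L, ∑ i : Fin d, c i u := by
    rw [Finset.mul_sum]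
    apply Finset.sum_le_sum
    intro u hu
    rw [hL, Finset.mem_filter] at hu
    exact le_of_lt (lt_of_not_ge hu.2)
  -- cost of Cc
  have hcostC : (Cc.card : ℝ) / lam ≤ ∑ u ∈ Cc, ∑ i : Fin d, c i u := by
    have h : ∀ u ∈ Cc, 1 / lam ≤ ∑ i : Fin d, c i u := by
      intro u hu
      rw [hCc, Finset.mem_inter] at hu
      obtain ⟨i, hi⟩ := hB u hu.2
      calc 1 / lam ≤ c i u := le_of_lt hi
        _ ≤ ∑ i : Fin d, c i u :=
          Finset.single_le_sum (fun j _ => hc j u) (Finset.mem_univ i)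
    have := Finset.card_nsmul_le_sum Cc _ _ h
    calc (Cc.card : ℝ) / lam = Cc.card • (1 / lam) := by
          rw [nsmul_eq_mul]; ring
      _ ≤ _ := this
  -- total cost bound
  have hdisj : Disjoint L Cc := by
    rw [Finset.disjoint_left]
    intro x hx hx2
    rw [hL, Finset.mem_filter, Finset.mem_sdiff] at hx
    rw [hCc, Finset.mem_inter] at hx2
    exact hx.1.2 hx2.2
  have hsubLC : L ∪ Cc ⊆ OPT := by
    intro x hx
    rw [Finset.mem_union] at hx
    rcases hx with hx | hx
    · rw [hL, Finset.mem_filter, Finset.mem_sdiff] at hx; exact hx.1.1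
    · rw [hCc, Finset.mem_inter] at hx; exact hx.1
  have htot : ∑ u ∈ L, ∑ i : Fin d, c i u + ∑ u ∈ Cc, ∑ i : Fin d, c i u ≤ (d : ℝ) := by
    rw [← Finset.sum_union hdisj]
    calc ∑ u ∈ L ∪ Cc, ∑ i : Fin d, c i u
        ≤ ∑ u ∈ OPT, ∑ i : Fin d, c i u :=
          Finset.sum_le_sum_of_subset_of_nonneg hsubLC
            (fun u _ _ => Finset.sum_nonneg fun i _ => hc i u)
      _ = ∑ i : Fin d, ∑ u ∈ OPT, c i u := Finset.sum_comm
      _ ≤ ∑ i : Fin d, (1 : ℝ) := Finset.sum_le_sum fun i _ => hOPT i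
      _ = (d : ℝ) := by simp
  have hcostL : ∑ u ∈ L, ∑ i : Fin d, c i u ≤ (d : ℝ) - (Cc.card : ℝ) / lam := by
    linarith
  have hrho : ρ * ∑ u ∈ L, ∑ i : Fin d, c i u ≤ ρ * ((d : ℝ) - (Cc.card : ℝ) / lam) :=
    mul_le_mul_of_nonneg_left hcostL hρ
  -- f Cc bound
  have hfC : f Cc ≤ f SB / a := by
    rw [le_div_iff₀ ha0]
    calc f Cc * a = a * f (OPT ∩ B) := by rw [hCc]; ring
      _ ≤ f SB := hSB
  -- assemble
  have hmono0 : f OPT ≤ f (OPT ∪ Sl) := hf_mono Finset.subset_union_left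
  rw [hEq] at hmono0
  linarith
end
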